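/- Let β and β' be distinct, non-orthogonal simple roots and let γ be a nonzero element of the root lattice. If γ−β and γ−β' are both roots, then γ is a root. -/

import Mathlib

open scoped RealInnerProductSpace BigOperators

/-- A reduced crystallographic root system `Φ` in a finite-dimensional real inner product
space (orthogonality being given by the inner product; for roots `α, β`, the pairing with
the coroot is `(β, α∨) = 2⟪β, α⟫/⟪α, α⟫`). -/
structure IsReducedCrystRootSystem {V : Type} [NormedAddCommGroup V]
    [InnerProductSpace ℝ V] [FiniteDimensional ℝ V] (Φ : Set V) : Prop where
  finite : Φ.Finite
  ne_zero : ∀ α ∈ Φ, α ≠ (0 : V)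
  reflect_mem : ∀ α ∈ Φ, ∀ β ∈ Φ, β - (2 * ⟪β, α⟫ / ⟪α, α⟫) • α ∈ Φ
  crystallographic : ∀ α ∈ Φ, ∀ β ∈ Φ, ∃ n : ℤ, 2 * ⟪β, α⟫ / ⟪α, α⟫ = (n : ℝ)
  reduced : ∀ α ∈ Φ, ∀ t : ℝ, t • α ∈ Φ → t = 1 ∨ t = -1

/-- `s : Fin n → V` is a base (set of simple roots) of the root system `Φ`: the `s i` are
linearly independent roots and every root is an integral linear combination of them with
either all coefficients nonnegative or all coefficients nonpositive. -/
structure IsBaseOf {V : Type} [NormedAddCommGroup V] [InnerProductSpace ℝ V]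
    [FiniteDimensional ℝ V] (Φ : Set V) {n : ℕ} (s : Fin n → V) : Prop where
  mem : ∀ i, s i ∈ Φ
  indep : LinearIndependent ℝ s
  decomp : ∀ β ∈ Φ, ∃ c : Fin n → ℤ, β = ∑ i, c i • s i ∧
    ((∀ i, 0 ≤ c i) ∨ (∀ i, c i ≤ 0))

section Aux

variable {V : Type} [NormedAddCommGroup V] [InnerProductSpace ℝ V] [FiniteDimensional ℝ V]
  {Φ : Set V}

lemma root_inner_self_pos (hΦ : IsReducedCrystRootSystem Φ) {α : V} (hα : α ∈ Φ) :
    0 < ⟪α, α⟫ :=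
  not_le.mp fun h => hΦ.ne_zero α hα (real_inner_self_nonpos.mp h)

lemma root_neg_mem (hΦ : IsReducedCrystRootSystem Φ) {α : V} (hα : α ∈ Φ) : -α ∈ Φ := by
  have h := hΦ.reflect_mem α hα α hα
  have h0 : ⟪α, α⟫ ≠ 0 := ne_of_gt (root_inner_self_pos hΦ hα)
  rw [mul_div_assoc, div_self h0, mul_one] at h
  have : α - (2 : ℝ) • α = -α := by
    rw [two_smul]; abel
  rwa [this] at h

/-- If two roots have negative inner product and nonzero sum, the sum is a root. -/
lemma root_add_mem (hΦ : IsReducedCrystRootSystem Φ) {α δ : V} (hα : α ∈ Φ) (hδ : δ ∈ Φ)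
    (hin : ⟪α, δ⟫ < 0) (hne : α + δ ≠ 0) : α + δ ∈ Φ := by
  have hAp := root_inner_self_pos hΦ hα
  have hDp := root_inner_self_pos hΦ hδ
  obtain ⟨m, hm⟩ := hΦ.crystallographic δ hδ α hα
  obtain ⟨k, hk⟩ := hΦ.crystallographic α hα δ hδ
  have hm' : 2 * ⟪α, δ⟫ = m * ⟪δ, δ⟫ := by
    field_simp at hm; linarith
  have hk' : 2 * ⟪δ, α⟫ = k * ⟪α, α⟫ := by
    field_simp at hk; linarith
  have hda : ⟪δ, α⟫ = ⟪α, δ⟫ := real_inner_comm α δ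
  have hmneg : m ≤ -1 := by
    have h0 : (m : ℝ) < 0 := by nlinarith
    have : m < 0 := by exact_mod_cast h0
    omega
  have hkneg : k ≤ -1 := by
    have h0 : (k : ℝ) < 0 := by nlinarith
    have : k < 0 := by exact_mod_cast h0
    omega
  have hα0 : ‖α‖ ≠ 0 := by simpa using hΦ.ne_zero α hα
  -- strict Cauchy-Schwarz
  have hCS : ⟪α, δ⟫ * ⟪α, δ⟫ < ⟪α, α⟫ * ⟪δ, δ⟫ := by
    have hlt : ⟪-α, δ⟫ < ‖(-α)‖ * ‖δ‖ := by
      rw [inner_lt_norm_mul_iff_real]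
      intro heq
      -- heq : ‖δ‖ • (-α) = ‖-α‖ • δ
      rw [norm_neg] at heq
      have hδeq : (-(‖δ‖ / ‖α‖)) • α = δ := by
        apply smul_right_injective V hα0
        show ‖α‖ • (-(‖δ‖ / ‖α‖) • α) = ‖α‖ • δ
        rw [smul_smul, ← heq, smul_neg, ← neg_smul]
        congr 1
        field_simp
      have hmem : (-(‖δ‖ / ‖α‖)) • α ∈ Φ := by rw [hδeq]; exact hδ
      rcases hΦ.reduced α hα _ hmem with h | h
      · have : (0:ℝ) < -(‖δ‖ / ‖α‖) := by rw [h]; norm_num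
        have : ‖δ‖ / ‖α‖ ≤ 0 := by linarith
        have hδ0 : ‖δ‖ ≠ 0 := by simpa using hΦ.ne_zero δ hδ
        have : 0 < ‖δ‖ / ‖α‖ := div_pos ((norm_nonneg δ).lt_of_ne (Ne.symm hδ0))
          ((norm_nonneg α).lt_of_ne (Ne.symm hα0))
        linarith
      · have : δ = -α := by rw [← hδeq, h, neg_one_smul]
        apply hne
        rw [this]; abel
    rw [norm_neg, inner_neg_left] at hlt
    have e1 : ⟪α, α⟫ = ‖α‖ * ‖α‖ := real_inner_self_eq_norm_mul_norm α
    have e2 : ⟪δ, δ⟫ = ‖δ‖ * ‖δ‖ := real_inner_self_eq_norm_mul_norm δ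
    nlinarith [norm_nonneg α, norm_nonneg δ]
  have hprod : m * k ≤ 3 := by
    have h4 : (m : ℝ) * k < 4 := by
      rw [hda] at hk'
      nlinarith
    have : ((m * k : ℤ) : ℝ) < ((4 : ℤ) : ℝ) := by push_cast; linarith
    have h5 : m * k < 4 := by exact_mod_cast this
    omega
  have hcase : m = -1 ∨ k = -1 := by
    by_contra hcon
    push_neg at hcon
    obtain ⟨hm1, hk1⟩ := hcon
    have hm2 : m ≤ -2 := by omega
    have hk2 : k ≤ -2 := by omega
    nlinarith
  rcases hcase with h | h
  · have hr := hΦ.reflect_mem δ hδ α hα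
    rw [hm, h] at hr
    have : α - ((-1 : ℤ) : ℝ) • δ = α + δ := by push_cast; rw [neg_smul, one_smul]; abel
    rwa [this] at hr
  · have hr := hΦ.reflect_mem α hα δ hδ
    rw [hk, h] at hr
    have : δ - ((-1 : ℤ) : ℝ) • α = α + δ := by push_cast; rw [neg_smul, one_smul]; abel
    rwa [this] at hr


lemma sub_simple_not_mem {n : ℕ} {s : Fin n → V} (hs : IsBaseOf Φ s) {i j : Fin n}
    (hij : i ≠ j) : s i - s j ∉ Φ := by
  classical
  intro hmem
  obtain ⟨c, hc, hsign⟩ := hs.decomp _ hmem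
  have hc' : s i - s j = ∑ k, ((c k : ℝ)) • s k := by
    rw [hc]
    congr 1
    funext k
    rw [Int.cast_smul_eq_zsmul]
  have hzero : ∑ k, (((c k : ℝ)) - (if k = i then 1 else 0) + (if k = j then 1 else 0)) • s k
      = 0 := by
    simp only [sub_smul, add_smul, ite_smul, one_smul, zero_smul]
    rw [Finset.sum_add_distrib, Finset.sum_sub_distrib, ← hc']
    simp [hij]
  have hall := Fintype.linearIndependent_iff.mp hs.indep _ hzero
  have hi := hall i
  have hj := hall j
  simp [hij, Ne.symm hij] at hi hj
  have hci : c i - 1 = 0 := by exact_mod_cast hi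
  have hcj : c j + 1 = 0 := by exact_mod_cast hj
  rcases hsign with h | h
  · have := h j; omega
  · have := h i; omega

lemma inner_simple_nonpos (hΦ : IsReducedCrystRootSystem Φ) {n : ℕ} {s : Fin n → V}
    (hs : IsBaseOf Φ s) {i j : Fin n} (hij : i ≠ j) : ⟪s i, s j⟫ ≤ 0 := by
  by_contra h
  push_neg at h
  have hnj : -(s j) ∈ Φ := root_neg_mem hΦ (hs.mem j)
  have hne : s i + -(s j) ≠ 0 := by
    rw [← sub_eq_add_neg, sub_ne_zero]
    exact fun he => hij (hs.indep.injective he)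
  have := root_add_mem hΦ (hs.mem i) hnj (by rw [inner_neg_right]; linarith) hne
  rw [← sub_eq_add_neg] at this
  exact sub_simple_not_mem hs hij this


set_option maxHeartbeats 1000000 in
lemma key_lemma (hΦ : IsReducedCrystRootSystem Φ) {n : ℕ} {s : Fin n → V}
    (hs : IsBaseOf Φ s) {b b' : Fin n} (hp : ⟪s b, s b'⟫ < 0)
    {γ : V} (hγP : ⟪s b, s b⟫ ≤ ⟪γ, s b⟫)
    (hα' : γ - s b' ∈ Φ) (hαb : γ - s b ∈ Φ) (hg1 : γ ≠ s b + s b') :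
    ⟪γ, s b⟫ = ⟪s b, s b⟫ ∧ 2 * ⟪s b, s b'⟫ = -⟪s b, s b⟫ ∧
      ⟪γ - s b', γ - s b'⟫ = 3 * ⟪s b, s b⟫ := by
  have hB : 0 < ⟪s b, s b⟫ := root_inner_self_pos hΦ (hs.mem b)
  have hA' : 0 < ⟪γ - s b', γ - s b'⟫ := root_inner_self_pos hΦ hα'
  set B := ⟪s b, s b⟫ with hBdef
  set p := ⟪s b, s b'⟫ with hpdef
  set P := ⟪γ, s b⟫ with hPdef
  set A' := ⟪γ - s b', γ - s b'⟫ with hA'def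
  have e1 : ⟪γ - s b, s b⟫ = P - B := by rw [inner_sub_left]
  have e2 : ⟪γ - s b', s b⟫ = P - p := by
    rw [inner_sub_left, ← real_inner_comm (s b') (s b)]
  have e3 : ⟪s b, γ - s b'⟫ = P - p := by rw [real_inner_comm, e2]
  have e4 : ⟪s b', s b⟫ = p := (real_inner_comm (s b') (s b)).symm
  -- integers
  obtain ⟨g, hg⟩ := hΦ.crystallographic (s b) (hs.mem b) (γ - s b) hαb
  obtain ⟨q, hq⟩ := hΦ.crystallographic (s b) (hs.mem b) (s b') (hs.mem b')
  obtain ⟨a, ha⟩ := hΦ.crystallographic (s b) (hs.mem b) (γ - s b') hα'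
  obtain ⟨a', ha'⟩ := hΦ.crystallographic (γ - s b') hα' (s b) (hs.mem b)
  rw [e1] at hg
  rw [e4] at hq
  rw [e2] at ha
  rw [e3] at ha'
  have hg' : 2 * (P - B) = g * B := by have := (div_eq_iff (ne_of_gt hB)).mp hg; linarith
  have hq' : 2 * p = q * B := by have := (div_eq_iff (ne_of_gt hB)).mp hq; linarith
  have ha2 : 2 * (P - p) = a * B := by have := (div_eq_iff (ne_of_gt hB)).mp ha; linarith
  have ha'2 : 2 * (P - p) = a' * A' := by have := (div_eq_iff (ne_of_gt hA')).mp ha'; linarith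
  have hgnn : 0 ≤ g := by
    have h0 : (0:ℝ) ≤ (g:ℝ) := by nlinarith
    exact_mod_cast h0
  have hqneg : q ≤ -1 := by
    have h0 : (q:ℝ) < 0 := by nlinarith
    have : q < 0 := by exact_mod_cast h0
    omega
  have haeq : a = g + 2 - q := by
    have h0 : (a : ℝ) * B = ((g : ℝ) + 2 - (q : ℝ)) * B := by
      have : ((g : ℝ) + 2 - (q : ℝ)) * B = 2 * (P - B) + 2 * B - 2 * p := by ring_nf; linarith [hg', hq']
      linarith [ha2]
    have h1 : (a : ℝ) = ((g : ℝ) + 2 - (q : ℝ)) := mul_right_cancel₀ (ne_of_gt hB) h0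
    exact_mod_cast h1
  have ha'pos : 1 ≤ a' := by
    have hPp : 0 < P - p := by linarith
    have h0 : (0:ℝ) < (a':ℝ) := by nlinarith
    have : 0 < a' := by exact_mod_cast h0
    omega
  -- strict Cauchy-Schwarz between γ - s b' and s b
  have hb0 : ‖s b‖ ≠ 0 := by simpa using hΦ.ne_zero (s b) (hs.mem b)
  have hCS : (P - p) * (P - p) < A' * B := by
    have hlt : ⟪γ - s b', s b⟫ < ‖γ - s b'‖ * ‖s b‖ := by
      rw [inner_lt_norm_mul_iff_real]
      intro heq
      -- heq : ‖s b‖ • (γ - s b') = ‖γ - s b'‖ • s b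
      have hr : (‖γ - s b'‖ / ‖s b‖) • s b = γ - s b' := by
        apply smul_right_injective V hb0
        show ‖s b‖ • ((‖γ - s b'‖ / ‖s b‖) • s b) = ‖s b‖ • (γ - s b')
        rw [smul_smul, heq]
        congr 1
        field_simp
      have hmem : (‖γ - s b'‖ / ‖s b‖) • s b ∈ Φ := by rw [hr]; exact hα'
      rcases hΦ.reduced (s b) (hs.mem b) _ hmem with h | h
      · rw [h, one_smul] at hr
        exact hg1 (sub_eq_iff_eq_add.mp hr.symm)
      · have : (0:ℝ) ≤ ‖γ - s b'‖ / ‖s b‖ :=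
          div_nonneg (norm_nonneg _) (norm_nonneg _)
        rw [h] at this
        linarith
    rw [e2] at hlt
    have f1 : A' = ‖γ - s b'‖ * ‖γ - s b'‖ := real_inner_self_eq_norm_mul_norm _
    have f2 : B = ‖s b‖ * ‖s b‖ := real_inner_self_eq_norm_mul_norm _
    have hPp : 0 < P - p := by linarith
    nlinarith [norm_nonneg (γ - s b'), norm_nonneg (s b)]
  have hprod : a * a' ≤ 3 := by
    have h4 : (a : ℝ) * (a' : ℝ) < 4 := by
      have hBA : 0 < B * A' := mul_pos hB hA'
      have hmul : (a : ℝ) * (a' : ℝ) * (B * A') = 4 * ((P - p) * (P - p)) := by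
        linear_combination (-(a' : ℝ) * A') * ha2 - 2 * (P - p) * ha'2
      have h6 : (a : ℝ) * (a' : ℝ) * (B * A') < 4 * (B * A') := by
        rw [hmul]
        nlinarith [hCS]
      exact lt_of_mul_lt_mul_right h6 hBA.le
    have : ((a * a' : ℤ) : ℝ) < ((4 : ℤ) : ℝ) := by push_cast; linarith
    have h5 : a * a' < 4 := by exact_mod_cast this
    omega
  have ha3 : 3 ≤ a := by omega
  have hfin : a = 3 ∧ a' = 1 := by
    constructor
    · nlinarith
    · nlinarith
  obtain ⟨haa, haa'⟩ := hfin
  have hg0 : g = 0 := by omega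
  have hqm1 : q = -1 := by omega
  rw [hg0] at hg'
  rw [hqm1] at hq'
  have hPB : P = B := by push_cast at hg'; linarith
  have h2p : 2 * p = -B := by push_cast at hq'; linarith
  refine ⟨hPB, h2p, ?_⟩
  rw [haa'] at ha'2
  push_cast at ha'2
  linarith

end Aux

/-- Let `β` and `β'` be distinct, non-orthogonal simple roots and let `γ`
be a nonzero element of the root lattice.  If `γ − β` and `γ − β'` are both roots, then
`γ` is a root. -/
theorem mem_of_sub_simple_mem_of_sub_simple_mem
    {V : Type} [NormedAddCommGroup V] [InnerProductSpace ℝ V] [FiniteDimensional ℝ V]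
    {Φ : Set V} (hΦ : IsReducedCrystRootSystem Φ)
    {n : ℕ} {s : Fin n → V} (hs : IsBaseOf Φ s)
    {b b' : Fin n} (hne : b ≠ b') (hno : ⟪s b, s b'⟫ ≠ 0)
    {γ : V} (hγ : γ ≠ 0) (hlat : ∃ c : Fin n → ℤ, γ = ∑ i, c i • s i)
    (h1 : γ - s b ∈ Φ) (h2 : γ - s b' ∈ Φ) :
    γ ∈ Φ := by
  have hp : ⟪s b, s b'⟫ < 0 := lt_of_le_of_ne (inner_simple_nonpos hΦ hs hne) hno
  by_cases hg1 : γ = s b + s b'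
  · rw [hg1]
    exact root_add_mem hΦ (hs.mem b) (hs.mem b') hp (hg1 ▸ hγ)
  by_cases hc1 : ⟪γ - s b, s b⟫ < 0
  · have h := root_add_mem hΦ h1 (hs.mem b) hc1 (by simpa using hγ)
    simpa using h
  by_cases hc2 : ⟪γ - s b', s b'⟫ < 0
  · have h := root_add_mem hΦ h2 (hs.mem b') hc2 (by simpa using hγ)
    simpa using h
  push_neg at hc1 hc2
  have hP : ⟪s b, s b⟫ ≤ ⟪γ, s b⟫ := by rw [inner_sub_left] at hc1; linarith
  have hP' : ⟪s b', s b'⟫ ≤ ⟪γ, s b'⟫ := by rw [inner_sub_left] at hc2; linarith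
  have hp' : ⟪s b', s b⟫ < 0 := by rwa [← real_inner_comm (s b') (s b)]
  have hg1' : γ ≠ s b' + s b := by rwa [add_comm]
  obtain ⟨hPB, h2p, hA'3⟩ := key_lemma hΦ hs hp hP h2 h1 hg1
  obtain ⟨hPB', h2p', hA3⟩ := key_lemma hΦ hs hp' hP' h1 h2 hg1'
  -- equal lengths of the two simple roots
  have hcomm : ⟪s b', s b⟫ = ⟪s b, s b'⟫ := (real_inner_comm (s b') (s b)).symm
  have hBB' : ⟪s b', s b'⟫ = ⟪s b, s b⟫ := by rw [hcomm] at h2p'; linarith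
  -- expand inner products
  have hexp : ⟪γ - s b, γ - s b'⟫ = ⟪γ, γ⟫ - ⟪γ, s b'⟫ - ⟪s b, γ⟫ + ⟪s b, s b'⟫ := by
    rw [inner_sub_left, inner_sub_right, inner_sub_right]; ring
  have hA : ⟪γ - s b, γ - s b⟫ = ⟪γ, γ⟫ - ⟪s b, γ⟫ - ⟪γ, s b⟫ + ⟪s b, s b⟫ := by
    rw [inner_sub_left, inner_sub_right, inner_sub_right]; ring
  have hsy : ⟪s b, γ⟫ = ⟪γ, s b⟫ := (real_inner_comm (s b) γ).symm
  have hnum : 2 * ⟪γ - s b, γ - s b'⟫ = 3 * ⟪s b, s b⟫ := by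
    rw [hBB'] at hA3
    rw [hexp, hsy, hPB, hPB', hBB']
    rw [hA, hsy, hPB] at hA3
    linarith
  have hB : 0 < ⟪s b, s b⟫ := root_inner_self_pos hΦ (hs.mem b)
  have hcoef : 2 * ⟪γ - s b, γ - s b'⟫ / ⟪γ - s b', γ - s b'⟫ = 1 := by
    rw [hA'3]
    rw [div_eq_one_iff_eq (by positivity)]
    exact hnum
  have hrefl := hΦ.reflect_mem (γ - s b') h2 (γ - s b) h1
  rw [hcoef, one_smul] at hrefl
  have heq : (γ - s b) - (γ - s b') = s b' - s b := by abel
  rw [heq] at hrefl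
  exact (sub_simple_not_mem hs (Ne.symm hne) hrefl).elim
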